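/- Let T₁ and T₂ be 𝒜-trees with 𝒜(T₁) = 𝒜(T₂). Then the following assertions are equivalent: (i) T₁ and T₂ are ancestrally compatible; (ii) T₁ and T₂ are locally compatible; (iii) for every A ∈ 𝒜(T₁) = 𝒜(T₂), the smallest member of 𝒞_𝒜(T₁) containing A equals the smallest member of 𝒞_𝒜(T₂) containing A, and for every X ∈ 𝒞_𝒜(T₁) and Y ∈ 𝒞_𝒜(T₂), if X ∩ Y ≠ ∅ then X ⊆ Y or Y ⊆ X. -/

import Mathlib

/-!
Common framework: rooted labeled trees ("𝒜-trees") following Llabrés–Rocha–Rosselló–Valiente.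

A `PreTree α V` is the raw data of a directed graph on (a finite subset of) `V` together with
a partial labeling of its nodes by labels in `α`.  The predicate `PreTree.IsATree` asserts that
this data is a finite rooted tree (the root reaches every node by a unique directed path),
that the labeling is injective, and that every leaf is labeled.
-/

structure PreTree (α : Type) (V : Type) where
  nodes : Set V
  arc : V → V → Prop
  label : V → Option α

namespace PreTree

variable {α V W : Type}

/-- There is a directed path from `u` to `v` (possibly trivial). -/
def path (T : PreTree α V) (u v : V) : Prop := Relation.ReflTransGen T.arc u v

/-- There is a non-trivial directed path (length ≥ 1) from `u` to `v`. -/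
def pathNT (T : PreTree α V) (u v : V) : Prop := Relation.TransGen T.arc u v

/-- `𝒜(T)`: the set of labels of all nodes of `T`. -/
def labelSet (T : PreTree α V) : Set α := {a | ∃ v, T.label v = some a}

/-- `𝒜_T(v)`: the cluster of `v`, i.e. the set of labels of all descendants of `v`
(including `v` itself). -/
def cluster (T : PreTree α V) (v : V) : Set α := {a | ∃ w, T.path v w ∧ T.label w = some a}

/-- `𝒞_𝒜(T)`: the cluster representation of `T`. -/
def clusterRep (T : PreTree α V) : Set (Set α) := {C | ∃ v ∈ T.nodes, T.cluster v = C}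

/-- A leaf is a node without children. -/
def IsLeaf (T : PreTree α V) (v : V) : Prop := v ∈ T.nodes ∧ ∀ w, ¬ T.arc v w

/-- `ℒ(T)`: the set of labels of the leaves of `T`. -/
def leafLabels (T : PreTree α V) : Set α := {a | ∃ v, T.IsLeaf v ∧ T.label v = some a}

/-- A node is elementary when it has exactly one child. -/
def IsElementary (T : PreTree α V) (v : V) : Prop := ∃! w, T.arc v w

/-- `T` is an 𝒜-tree: a finite rooted tree (every node reachable from the root by a unique
directed path, which is captured by unique parents, acyclicity and reachability from a root)
with an injective partial labeling such that every leaf is labeled. -/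
structure IsATree (T : PreTree α V) : Prop where
  finite_nodes : T.nodes.Finite
  arc_mem_left : ∀ {u v : V}, T.arc u v → u ∈ T.nodes
  arc_mem_right : ∀ {u v : V}, T.arc u v → v ∈ T.nodes
  parent_unique : ∀ {u v w : V}, T.arc u w → T.arc v w → u = v
  acyclic : ∀ {u v : V}, T.arc u v → ¬ T.path v u
  rooted : T.nodes.Nonempty → ∃ r ∈ T.nodes, ∀ v ∈ T.nodes, T.path r v
  label_mem : ∀ {v : V} {a : α}, T.label v = some a → v ∈ T.nodes
  label_inj : ∀ {u v : V} {a : α}, T.label u = some a → T.label v = some a → u = v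
  leaf_labeled : ∀ v ∈ T.nodes, (∀ w, ¬ T.arc v w) → ∃ a, T.label v = some a

/-- A semi-labeled tree over `𝒜` is an 𝒜-tree all of whose elementary nodes are labeled. -/
def IsSemiLabeled (T : PreTree α V) : Prop :=
  T.IsATree ∧ ∀ v ∈ T.nodes, T.IsElementary v → ∃ a, T.label v = some a

open Classical in
/-- The restriction `T|X`: the subtree of `T` induced on the nodes whose cluster meets `X`,
keeping exactly the labels that belong to `X`. -/
noncomputable def restrict (T : PreTree α V) (X : Set α) : PreTree α V where
  nodes := {v | v ∈ T.nodes ∧ (T.cluster v ∩ X).Nonempty}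
  arc u v := T.arc u v ∧ (T.cluster u ∩ X).Nonempty ∧ (T.cluster v ∩ X).Nonempty
  label v := if (∃ a ∈ X, T.label v = some a) then T.label v else none

/-- A weak topological embedding `f : S → T`: an injective map on nodes which preserves labels
and preserves and reflects directed paths. -/
def IsWTE (S : PreTree α V) (T : PreTree α W) (f : V → W) : Prop :=
  (∀ v ∈ S.nodes, f v ∈ T.nodes) ∧
  (∀ u ∈ S.nodes, ∀ v ∈ S.nodes, f u = f v → u = v) ∧
  (∀ (v : V) (a : α), S.label v = some a → T.label (f v) = some a) ∧
  (∀ u ∈ S.nodes, ∀ v ∈ S.nodes, (S.path u v ↔ T.path (f u) (f v)))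

/-- Two 𝒜-trees are ancestrally compatible when they admit weak topological embeddings into
a same 𝒜-tree. -/
def AncCompat (T₁ : PreTree α V) (T₂ : PreTree α W) : Prop :=
  ∃ (U : Type) (T : PreTree α U), T.IsATree ∧ (∃ f, IsWTE T₁ T f) ∧ (∃ g, IsWTE T₂ T g)

/-- `m` is the most recent common ancestor of `x` and `y` in `T`. -/
def IsMRCA (T : PreTree α V) (x y m : V) : Prop :=
  T.path m x ∧ T.path m y ∧ ∀ n, T.path n x → T.path n y → T.path n m

/-- Local compatibility: condition (C1) on pairs of common labels and condition (C2)
on triples of common labels. -/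
def LocallyCompatible (T₁ : PreTree α V) (T₂ : PreTree α W) : Prop :=
  (∀ (a b : α) (x₁ y₁ : V) (x₂ y₂ : W),
      T₁.label x₁ = some a → T₁.label y₁ = some b →
      T₂.label x₂ = some a → T₂.label y₂ = some b →
      (T₁.path x₁ y₁ ↔ T₂.path x₂ y₂)) ∧
  (∀ (a b c : α) (va₁ vb₁ vc₁ m₁ m₁' : V) (va₂ vb₂ vc₂ m₂ m₂' : W),
      T₁.label va₁ = some a → T₁.label vb₁ = some b → T₁.label vc₁ = some c →
      T₂.label va₂ = some a → T₂.label vb₂ = some b → T₂.label vc₂ = some c →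
      IsMRCA T₁ vb₁ vc₁ m₁ → IsMRCA T₁ va₁ vb₁ m₁' →
      IsMRCA T₂ va₂ vb₂ m₂ → IsMRCA T₂ vb₂ vc₂ m₂' →
      T₁.pathNT m₁ m₁' → ¬ T₂.pathNT m₂ m₂')

/-- `T` ancestrally displays `S`. -/
def Displays (T : PreTree α W) (S : PreTree α V) : Prop :=
  S.labelSet ⊆ T.labelSet ∧
  (∀ (a b : α) (x y : V) (x' y' : W),
      S.label x = some a → S.label y = some b →
      T.label x' = some a → T.label y' = some b →
      (S.path x y ↔ T.path x' y')) ∧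
  S.clusterRep ⊆ (T.restrict S.labelSet).clusterRep

/-- An unlabeled elementary node. -/
def ElemUnlab (T : PreTree α V) (v : V) : Prop := T.label v = none ∧ T.IsElementary v

/-- The semi-labeled tree obtained from `S` by removing its unlabeled elementary nodes and
replacing by single arcs the maximal paths all of whose intermediate nodes are unlabeled
and elementary. -/
def contract (S : PreTree α V) : PreTree α V where
  nodes := {v | v ∈ S.nodes ∧ ¬ ElemUnlab S v}
  arc u v := (u ∈ S.nodes ∧ ¬ ElemUnlab S u) ∧ (v ∈ S.nodes ∧ ¬ ElemUnlab S v) ∧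
    ∃ l : List V, List.Chain' S.arc (u :: (l ++ [v])) ∧ ∀ m ∈ l, ElemUnlab S m
  label := S.label

/-- `X` is the smallest member of the family `R` containing the label `a`. -/
def SmallestContaining (R : Set (Set α)) (a : α) (X : Set α) : Prop :=
  X ∈ R ∧ a ∈ X ∧ ∀ Y ∈ R, a ∈ Y → X ⊆ Y

/-- `m_{ℓ,Y}`: the number of nodes of `T` whose cluster is `Y`. -/
noncomputable def mcount (T : PreTree α V) (Y : Set α) : ℕ :=
  {v | v ∈ T.nodes ∧ T.cluster v = Y}.ncard

/-- `𝒞 = 𝒞_𝒜(T₁) ∪ 𝒞_𝒜(T₂)`. -/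
def joinC (T₁ : PreTree α V) (T₂ : PreTree α W) : Set (Set α) :=
  T₁.clusterRep ∪ T₂.clusterRep

/-- `n_Y = max (m_{1,Y}, m_{2,Y})`. -/
noncomputable def joinN (T₁ : PreTree α V) (T₂ : PreTree α W) (Y : Set α) : ℕ :=
  max (mcount T₁ Y) (mcount T₂ Y)

open Classical in
/-- The join `T_{1,2}` of two 𝒜-trees with the same label set: nodes are the pairs
`w_{Y,j} = (Y, j)` with `Y ∈ 𝒞` and `1 ≤ j ≤ n_Y`, with the chain arcs `(w_{Y,j}, w_{Y,j-1})`
and the arcs `(w_{Y,1}, w_{Z,n_Z})` for `Z ⊊ Y` maximal in `𝒞`, and `w_{Y,1}` labeled `A`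
exactly when `Y = (⋃ {Z ∈ 𝒞 ∣ Z ⊊ Y}) ⊔ {A}`. -/
noncomputable def join (T₁ : PreTree α V) (T₂ : PreTree α W) : PreTree α (Set α × ℕ) where
  nodes := {p | p.1 ∈ joinC T₁ T₂ ∧ 1 ≤ p.2 ∧ p.2 ≤ joinN T₁ T₂ p.1}
  arc p q := p.1 ∈ joinC T₁ T₂ ∧ q.1 ∈ joinC T₁ T₂ ∧
    ((q.1 = p.1 ∧ p.2 = q.2 + 1 ∧ 1 ≤ q.2 ∧ p.2 ≤ joinN T₁ T₂ p.1) ∨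
     (p.2 = 1 ∧ q.1 ⊂ p.1 ∧ q.2 = joinN T₁ T₂ q.1 ∧ 1 ≤ q.2 ∧
       ¬ ∃ Z ∈ joinC T₁ T₂, q.1 ⊂ Z ∧ Z ⊂ p.1))
  label p :=
    if h : p.2 = 1 ∧ p.1 ∈ joinC T₁ T₂ ∧
        ∃ a : α, a ∉ ⋃₀ {Z ∈ joinC T₁ T₂ | Z ⊂ p.1} ∧
          p.1 = (⋃₀ {Z ∈ joinC T₁ T₂ | Z ⊂ p.1}) ∪ {a}
    then some h.2.2.choose else none

/-- The canonical map `f_ℓ : V(T_ℓ) → V(T_{1,2})`, sending the `i`-th node (from the bottom)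
of the chain of nodes of `T` with cluster `Y` to `w_{Y,i}`. -/
noncomputable def joinMap (T : PreTree α V) (v : V) : Set α × ℕ :=
  (T.cluster v, {u | u ∈ T.nodes ∧ T.cluster u = T.cluster v ∧ T.pathNT v u}.ncard + 1)

end PreTree

/-!
(i) ⇒ (ii): a common host tree identifies the nodes of `T₁` and `T₂` carrying the same label
and reflects paths, which gives (C1); a violation of (C2) would produce two ancestors of `v_B`
in the host of which neither lies above the other.

(ii) ⇒ (iii): by (C1) the nodes labeled `A` have the same cluster in both trees, namely the
smallest cluster containing `A`. If a cluster `X` of `T₁` and a cluster `Y` of `T₂` cross, pick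
`C ∈ X ∩ Y`, `A ∈ X \ Y` and `B ∈ Y \ X`: then `v_{B,C} ⇝ v_{A,C}` non-trivially in `T₁` and
`v_{A,C} ⇝ v_{B,C}` non-trivially in `T₂`, against (C2).

(iii) ⇒ (i): the union `𝒞` of the two cluster families is then laminar, so the join `T_{1,2}`
(the Hasse diagram of `𝒞`, each cluster `Y` stretched into a chain of `n_Y` nodes) is an 𝒜-tree.
In any 𝒜-tree, `u` is an ancestor of `v` iff the cluster of `v` is contained in that of `u`,
with `v` at most as high as `u` in the chain of nodes sharing the cluster; this is exactly the
ancestor relation of `T_{1,2}` read through `joinMap`, which is therefore a weak topological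
embedding of both trees.
-/

namespace PreTree

variable {α V W : Type}

section Tree

variable {T : PreTree α V} {u v w x y : V} {a : α}

lemma pathNT_of_path_of_ne (h : T.path u v) (hne : u ≠ v) : T.pathNT u v :=
  (Relation.reflTransGen_iff_eq_or_transGen.mp h).resolve_left hne.symm

lemma IsATree.path_antisymm (hT : T.IsATree) (h : T.path u v) (h' : T.path v u) : u = v := by
  rcases Relation.ReflTransGen.cases_head h with rfl | ⟨w, hw, hwv⟩
  · rfl
  · exact absurd (hwv.trans h') (hT.acyclic hw)

lemma IsATree.pathNT_irrefl (hT : T.IsATree) (u : V) : ¬ T.pathNT u u := fun h =>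
  let ⟨_, hw, hwu⟩ := Relation.TransGen.head'_iff.mp h
  hT.acyclic hw hwu

lemma IsATree.mem_nodes_of_path (hT : T.IsATree) (hu : u ∈ T.nodes) (h : T.path u v) :
    v ∈ T.nodes := by
  rcases Relation.ReflTransGen.cases_tail h with rfl | ⟨w, _, hwv⟩
  · exact hu
  · exact hT.arc_mem_right hwv

lemma IsATree.mem_nodes_of_path' (hT : T.IsATree) (h : T.path u v) (hv : v ∈ T.nodes) :
    u ∈ T.nodes := by
  rcases Relation.ReflTransGen.cases_head h with rfl | ⟨w, hw, _⟩
  · exact hv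
  · exact hT.arc_mem_left hw

lemma IsATree.path_or_path_of_path_of_path (hT : T.IsATree) (hx : T.path x w)
    (hy : T.path y w) : T.path x y ∨ T.path y x := by
  induction hy with
  | refl => exact Or.inl hx
  | @tail z' z hyz' harc ih =>
    rcases Relation.ReflTransGen.cases_tail hx with rfl | ⟨w, hxw, hwz⟩
    · exact Or.inr (hyz'.tail harc)
    · obtain rfl : w = z' := hT.parent_unique hwz harc
      exact ih hxw

lemma IsATree.finite_ancestors (hT : T.IsATree) (v : V) : {u | T.path u v}.Finite :=
  (hT.finite_nodes.insert v).subset fun u hu => by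
    rcases Relation.ReflTransGen.cases_head hu with rfl | ⟨x, hux, _⟩
    · exact Set.mem_insert _ _
    · exact Set.mem_insert_of_mem _ (hT.arc_mem_left hux)

lemma IsATree.finite_descendants (hT : T.IsATree) (v : V) : {w | T.path v w}.Finite :=
  (hT.finite_nodes.insert v).subset fun w hw => by
    rcases Relation.ReflTransGen.cases_tail hw with rfl | ⟨x, _, hxw⟩
    · exact Set.mem_insert _ _
    · exact Set.mem_insert_of_mem _ (hT.arc_mem_right hxw)

lemma IsATree.exists_deepest (hT : T.IsATree) {S : Set V} (hfin : S.Finite) (hne : S.Nonempty) :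
    ∃ m ∈ S, ∀ n ∈ S, T.path m n → n = m := by
  obtain ⟨m, hm, hmax⟩ := hfin.exists_maximalFor (fun n => {u | T.path u n}.ncard) S hne
  refine ⟨m, hm, fun n hn hmn => by_contra fun hnm => ?_⟩
  have hlt : {u | T.path u m}.ncard < {u | T.path u n}.ncard :=
    Set.ncard_lt_ncard ⟨fun u hu => hu.trans hmn,
      fun hsub => hnm (hT.path_antisymm (hsub .refl) hmn)⟩ (hT.finite_ancestors n)
  exact (hmax hn hlt.le).not_gt hlt

lemma IsATree.exists_path_isLeaf (hT : T.IsATree) (hv : v ∈ T.nodes) :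
    ∃ w, T.path v w ∧ T.IsLeaf w := by
  obtain ⟨w, hvw, hdeep⟩ := hT.exists_deepest (hT.finite_descendants v) ⟨v, .refl⟩
  refine ⟨w, hvw, hT.mem_nodes_of_path hv hvw, fun x hx => ?_⟩
  obtain rfl := hdeep x (hvw.tail hx) (.single hx)
  exact hT.acyclic hx .refl

lemma IsATree.exists_isMRCA (hT : T.IsATree) (hx : x ∈ T.nodes) (hy : y ∈ T.nodes) :
    ∃ m, IsMRCA T x y m := by
  obtain ⟨r, -, hr⟩ := hT.rooted ⟨x, hx⟩
  obtain ⟨m, ⟨hmx, hmy⟩, hdeep⟩ := hT.exists_deepest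
    (S := {n | T.path n x ∧ T.path n y}) ((hT.finite_ancestors x).subset fun _ hn => hn.1)
    ⟨r, hr x hx, hr y hy⟩
  refine ⟨m, hmx, hmy, fun n hnx hny => ?_⟩
  rcases hT.path_or_path_of_path_of_path hnx hmx with h | h
  · exact h
  · rw [hdeep n ⟨hnx, hny⟩ h]
    exact .refl

lemma IsMRCA.symm {m : V} (h : IsMRCA T x y m) : IsMRCA T y x m :=
  ⟨h.2.1, h.1, fun n h1 h2 => h.2.2 n h2 h1⟩

lemma mem_cluster_self (h : T.label v = some a) : a ∈ T.cluster v := ⟨v, .refl, h⟩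

lemma cluster_subset_of_path (h : T.path u v) : T.cluster v ⊆ T.cluster u :=
  fun _ ⟨w, hw, hl⟩ => ⟨w, h.trans hw, hl⟩

lemma cluster_subset_labelSet (T : PreTree α V) (v : V) : T.cluster v ⊆ T.labelSet :=
  fun _ ⟨w, _, hl⟩ => ⟨w, hl⟩

lemma IsATree.mem_cluster_iff (hT : T.IsATree) (hw : T.label w = some a) :
    a ∈ T.cluster v ↔ T.path v w :=
  ⟨fun ⟨_, hx, hl⟩ => hT.label_inj hl hw ▸ hx, fun h => ⟨w, h, hw⟩⟩

lemma IsATree.path_or_path_of_cluster_inter (hT : T.IsATree)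
    (h : (T.cluster u ∩ T.cluster v).Nonempty) : T.path u v ∨ T.path v u := by
  obtain ⟨a, ⟨w, huw, hw⟩, hav⟩ := h
  exact hT.path_or_path_of_path_of_path huw ((hT.mem_cluster_iff hw).mp hav)

lemma IsATree.cluster_subset_or_subset (hT : T.IsATree)
    (h : (T.cluster u ∩ T.cluster v).Nonempty) :
    T.cluster u ⊆ T.cluster v ∨ T.cluster v ⊆ T.cluster u :=
  (hT.path_or_path_of_cluster_inter h).symm.imp cluster_subset_of_path cluster_subset_of_path

lemma cluster_eq_singleton_of_isLeaf (hw : T.IsLeaf w) (ha : T.label w = some a) :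
    T.cluster w = {a} := by
  refine Set.Subset.antisymm (fun b ⟨x, hwx, hx⟩ => ?_) (Set.singleton_subset_iff.mpr
    (mem_cluster_self ha))
  rcases Relation.ReflTransGen.cases_head hwx with rfl | ⟨y, hy, _⟩
  · exact Option.some_inj.mp (hx.symm.trans ha)
  · exact absurd hy (hw.2 y)

lemma IsATree.exists_singleton_mem_clusterRep (hT : T.IsATree) (hv : v ∈ T.nodes) :
    ∃ a ∈ T.cluster v, {a} ∈ T.clusterRep := by
  obtain ⟨w, hvw, hw⟩ := hT.exists_path_isLeaf hv
  obtain ⟨a, ha⟩ := hT.leaf_labeled w hw.1 hw.2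
  exact ⟨a, ⟨w, hvw, ha⟩, w, hw.1, cluster_eq_singleton_of_isLeaf hw ha⟩

lemma IsATree.cluster_nonempty (hT : T.IsATree) (hv : v ∈ T.nodes) : (T.cluster v).Nonempty :=
  let ⟨a, ha, _⟩ := hT.exists_singleton_mem_clusterRep hv
  ⟨a, ha⟩

lemma IsATree.labelSet_mem_clusterRep (hT : T.IsATree) (hne : T.nodes.Nonempty) :
    T.labelSet ∈ T.clusterRep := by
  obtain ⟨r, hr, hroot⟩ := hT.rooted hne
  refine ⟨r, hr, (cluster_subset_labelSet T r).antisymm fun a ⟨v, hv⟩ => ?_⟩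
  exact ⟨v, hroot v (hT.label_mem hv), hv⟩

lemma IsATree.labelSet_finite (hT : T.IsATree) : T.labelSet.Finite :=
  ((hT.finite_nodes.image T.label).preimage (Option.some_injective α).injOn).subset
    fun _ ⟨v, hv⟩ => ⟨v, hT.label_mem hv, hv⟩

lemma IsATree.cluster_finite (hT : T.IsATree) (v : V) : (T.cluster v).Finite :=
  hT.labelSet_finite.subset (cluster_subset_labelSet T v)

lemma IsATree.clusterRep_finite (hT : T.IsATree) : T.clusterRep.Finite :=
  (hT.finite_nodes.image T.cluster).subset fun _ ⟨v, hv, hX⟩ => ⟨v, hv, hX⟩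

lemma IsATree.smallestContaining_cluster (hT : T.IsATree) (hv : T.label v = some a) :
    SmallestContaining T.clusterRep a (T.cluster v) :=
  ⟨⟨v, hT.label_mem hv, rfl⟩, mem_cluster_self hv,
    fun _ ⟨_, _, hY⟩ haY => hY ▸ cluster_subset_of_path ((hT.mem_cluster_iff hv).mp (hY ▸ haY))⟩

end Tree

section LocalCompatibility

variable {U : Type} {T : PreTree α U} {T₁ : PreTree α V} {T₂ : PreTree α W}

lemma IsWTE.label_map {f : V → U} (hf : IsWTE T₁ T f) {v : V} {a : α}
    (hv : T₁.label v = some a) : T.label (f v) = some a :=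
  hf.2.2.1 v a hv

lemma IsWTE.path_iff {f : V → U} (hf : IsWTE T₁ T f) {u v : V} (hu : u ∈ T₁.nodes)
    (hv : v ∈ T₁.nodes) : T₁.path u v ↔ T.path (f u) (f v) :=
  hf.2.2.2 u hu v hv

lemma IsMRCA.not_path_of_pathNT {y z m m' : U} (hT : T.IsATree) (hm : IsMRCA T y z m)
    (hmm' : T.pathNT m m') (hy : T.path m' y) : ¬ T.path m' z := fun hz =>
  hT.pathNT_irrefl m (hmm'.trans_left (hm.2.2 m' hy hz))

lemma AncCompat.locallyCompatible (h₁ : T₁.IsATree) (h₂ : T₂.IsATree) (h : AncCompat T₁ T₂) :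
    LocallyCompatible T₁ T₂ := by
  obtain ⟨U, T, hT, ⟨f, hf⟩, ⟨g, hg⟩⟩ := h
  have hfg {v₁ : V} {v₂ : W} {a : α} (hv₁ : T₁.label v₁ = some a) (hv₂ : T₂.label v₂ = some a) :
      f v₁ = g v₂ :=
    hT.label_inj (hf.label_map hv₁) (hg.label_map hv₂)
  refine ⟨fun a b x₁ y₁ x₂ y₂ hx₁ hy₁ hx₂ hy₂ => ?_,
    fun a b c va₁ vb₁ vc₁ m₁ m₁' va₂ vb₂ vc₂ m₂ m₂' hva₁ hvb₁ hvc₁ hva₂ hvb₂ hvc₂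
      hm₁ hm₁' hm₂ hm₂' hpath₁ hpath₂ => ?_⟩
  · rw [hf.path_iff (h₁.label_mem hx₁) (h₁.label_mem hy₁), hfg hx₁ hx₂, hfg hy₁ hy₂,
      ← hg.path_iff (h₂.label_mem hx₂) (h₂.label_mem hy₂)]
  · have hm₁'mem := h₁.mem_nodes_of_path' hm₁'.1 (h₁.label_mem hva₁)
    have hm₂'mem := h₂.mem_nodes_of_path' hm₂'.1 (h₂.label_mem hvb₂)
    have hnc : ¬ T.path (f m₁') (g vc₂) := by
      rw [← hfg hvc₁ hvc₂, ← hf.path_iff hm₁'mem (h₁.label_mem hvc₁)]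
      exact hm₁.not_path_of_pathNT h₁ hpath₁ hm₁'.2.1
    have hna : ¬ T.path (g m₂') (f va₁) := by
      rw [hfg hva₁ hva₂, ← hg.path_iff hm₂'mem (h₂.label_mem hva₂)]
      exact hm₂.symm.not_path_of_pathNT h₂ hpath₂ hm₂'.1
    have hb₁ : T.path (f m₁') (g vb₂) :=
      hfg hvb₁ hvb₂ ▸ (hf.path_iff hm₁'mem (h₁.label_mem hvb₁)).mp hm₁'.2.1
    have hb₂ : T.path (g m₂') (g vb₂) := (hg.path_iff hm₂'mem (h₂.label_mem hvb₂)).mp hm₂'.1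
    rcases hT.path_or_path_of_path_of_path hb₁ hb₂ with h | h
    · exact hnc (h.trans ((hg.path_iff hm₂'mem (h₂.label_mem hvc₂)).mp hm₂'.2.1))
    · exact hna (h.trans ((hf.path_iff hm₁'mem (h₁.label_mem hva₁)).mp hm₁'.1))

/-- Condition (C1) of local compatibility. -/
def PathCompatible (T₁ : PreTree α V) (T₂ : PreTree α W) : Prop :=
  ∀ (a b : α) (x₁ y₁ : V) (x₂ y₂ : W),
    T₁.label x₁ = some a → T₁.label y₁ = some b →
    T₂.label x₂ = some a → T₂.label y₂ = some b →
    (T₁.path x₁ y₁ ↔ T₂.path x₂ y₂)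

lemma PathCompatible.cluster_eq (h : PathCompatible T₁ T₂) (hl : T₁.labelSet = T₂.labelSet)
    {v₁ : V} {v₂ : W} {a : α} (hv₁ : T₁.label v₁ = some a) (hv₂ : T₂.label v₂ = some a) :
    T₁.cluster v₁ = T₂.cluster v₂ := by
  ext b
  constructor
  · rintro ⟨w₁, hp, hw₁⟩
    obtain ⟨w₂, hw₂⟩ : b ∈ T₂.labelSet := hl ▸ ⟨w₁, hw₁⟩
    exact ⟨w₂, (h a b v₁ w₁ v₂ w₂ hv₁ hw₁ hv₂ hw₂).mp hp, hw₂⟩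
  · rintro ⟨w₂, hp, hw₂⟩
    obtain ⟨w₁, hw₁⟩ : b ∈ T₁.labelSet := hl ▸ ⟨w₂, hw₂⟩
    exact ⟨w₁, (h a b v₁ w₁ v₂ w₂ hv₁ hw₁ hv₂ hw₂).mpr hp, hw₁⟩

lemma PathCompatible.exists_smallestContaining (h : PathCompatible T₁ T₂) (h₁ : T₁.IsATree)
    (h₂ : T₂.IsATree) (hl : T₁.labelSet = T₂.labelSet) {a : α} (ha : a ∈ T₁.labelSet) :
    ∃ X, SmallestContaining T₁.clusterRep a X ∧ SmallestContaining T₂.clusterRep a X := by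
  obtain ⟨v₁, hv₁⟩ := ha
  obtain ⟨v₂, hv₂⟩ : a ∈ T₂.labelSet := hl ▸ ⟨v₁, hv₁⟩
  exact ⟨T₁.cluster v₁, h₁.smallestContaining_cluster hv₁,
    h.cluster_eq hl hv₁ hv₂ ▸ h₂.smallestContaining_cluster hv₂⟩

lemma IsATree.pathNT_of_isMRCA_of_not_path (hT : T.IsATree) {u va vb vc m m' : U}
    (hac : IsMRCA T va vc m) (hbc : IsMRCA T vb vc m') (hua : T.path u va) (huc : T.path u vc)
    (hub : ¬ T.path u vb) : T.pathNT m' m := by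
  have hmb : ¬ T.path m vb := fun h => hub ((hac.2.2 u hua huc).trans h)
  rcases hT.path_or_path_of_path_of_path hac.2.1 hbc.2.1 with h | h
  · exact absurd (h.trans hbc.1) hmb
  · exact pathNT_of_path_of_ne h fun he => hmb (he ▸ hbc.1)

lemma LocallyCompatible.subset_or_subset (h : LocallyCompatible T₁ T₂) (h₁ : T₁.IsATree)
    (h₂ : T₂.IsATree) (hl : T₁.labelSet = T₂.labelSet) {X Y : Set α} (hX : X ∈ T₁.clusterRep)
    (hY : Y ∈ T₂.clusterRep) (hXY : (X ∩ Y).Nonempty) : X ⊆ Y ∨ Y ⊆ X := by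
  obtain ⟨u, -, rfl⟩ := hX
  obtain ⟨w, -, rfl⟩ := hY
  obtain ⟨c, ⟨vc₁, huc, hvc₁⟩, ⟨vc₂, hwc, hvc₂⟩⟩ := hXY
  by_contra! hcross
  obtain ⟨a, ⟨va₁, hua, hva₁⟩, haY⟩ := Set.not_subset.mp hcross.1
  obtain ⟨b, ⟨vb₂, hwb, hvb₂⟩, hbX⟩ := Set.not_subset.mp hcross.2
  obtain ⟨va₂, hva₂⟩ : a ∈ T₂.labelSet := hl ▸ ⟨va₁, hva₁⟩
  obtain ⟨vb₁, hvb₁⟩ : b ∈ T₁.labelSet := hl ▸ ⟨vb₂, hvb₂⟩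
  obtain ⟨mac₁, hmac₁⟩ := h₁.exists_isMRCA (h₁.label_mem hva₁) (h₁.label_mem hvc₁)
  obtain ⟨mbc₁, hmbc₁⟩ := h₁.exists_isMRCA (h₁.label_mem hvb₁) (h₁.label_mem hvc₁)
  obtain ⟨mac₂, hmac₂⟩ := h₂.exists_isMRCA (h₂.label_mem hva₂) (h₂.label_mem hvc₂)
  obtain ⟨mbc₂, hmbc₂⟩ := h₂.exists_isMRCA (h₂.label_mem hvb₂) (h₂.label_mem hvc₂)
  exact h.2 a c b va₁ vc₁ vb₁ mbc₁ mac₁ va₂ vc₂ vb₂ mac₂ mbc₂ hva₁ hvc₁ hvb₁ hva₂ hvc₂ hvb₂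
    hmbc₁.symm hmac₁ hmac₂ hmbc₂.symm
    (h₁.pathNT_of_isMRCA_of_not_path hmac₁ hmbc₁ hua huc fun hp => hbX ⟨vb₁, hp, hvb₁⟩)
    (h₂.pathNT_of_isMRCA_of_not_path hmbc₂ hmac₂ hwb hwc fun hp => haY ⟨va₂, hp, hva₂⟩)

end LocalCompatibility

section Join

variable {T₁ : PreTree α V} {T₂ : PreTree α W} {Y Z : Set α}

def IsLaminar (R : Set (Set α)) : Prop :=
  ∀ X ∈ R, ∀ Y ∈ R, (X ∩ Y).Nonempty → X ⊆ Y ∨ Y ⊆ X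

lemma isLaminar_joinC (h₁ : T₁.IsATree) (h₂ : T₂.IsATree)
    (hnest : ∀ X ∈ T₁.clusterRep, ∀ Y ∈ T₂.clusterRep, (X ∩ Y).Nonempty → X ⊆ Y ∨ Y ⊆ X) :
    IsLaminar (joinC T₁ T₂) := by
  rintro X (hX | hX) Y (hY | hY) hXY
  · obtain ⟨⟨u, -, rfl⟩, ⟨v, -, rfl⟩⟩ := And.intro hX hY
    exact h₁.cluster_subset_or_subset hXY
  · exact hnest X hX Y hY hXY
  · exact (hnest Y hY X hX (Set.inter_comm X Y ▸ hXY)).symm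
  · obtain ⟨⟨u, -, rfl⟩, ⟨v, -, rfl⟩⟩ := And.intro hX hY
    exact h₂.cluster_subset_or_subset hXY

lemma finite_of_mem_joinC (h₁ : T₁.IsATree) (h₂ : T₂.IsATree) (hY : Y ∈ joinC T₁ T₂) :
    Y.Finite := by
  rcases hY with ⟨v, -, rfl⟩ | ⟨v, -, rfl⟩
  exacts [h₁.cluster_finite v, h₂.cluster_finite v]

lemma exists_singleton_mem_joinC (h₁ : T₁.IsATree) (h₂ : T₂.IsATree) (hY : Y ∈ joinC T₁ T₂) :
    ∃ a ∈ Y, {a} ∈ joinC T₁ T₂ := by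
  rcases hY with ⟨v, hv, rfl⟩ | ⟨v, hv, rfl⟩
  · obtain ⟨a, ha, hs⟩ := h₁.exists_singleton_mem_clusterRep hv
    exact ⟨a, ha, Or.inl hs⟩
  · obtain ⟨a, ha, hs⟩ := h₂.exists_singleton_mem_clusterRep hv
    exact ⟨a, ha, Or.inr hs⟩

lemma subset_labelSet_of_mem_joinC (hl : T₁.labelSet = T₂.labelSet) (hY : Y ∈ joinC T₁ T₂) :
    Y ⊆ T₁.labelSet := by
  rcases hY with ⟨v, -, rfl⟩ | ⟨v, -, rfl⟩
  exacts [cluster_subset_labelSet T₁ v, hl ▸ cluster_subset_labelSet T₂ v]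

lemma joinC_finite (h₁ : T₁.IsATree) (h₂ : T₂.IsATree) : (joinC T₁ T₂).Finite :=
  h₁.clusterRep_finite.union h₂.clusterRep_finite

lemma labelSet_mem_joinC (h₁ : T₁.IsATree) (h₂ : T₂.IsATree) (hl : T₁.labelSet = T₂.labelSet)
    (hne : (joinC T₁ T₂).Nonempty) : T₁.labelSet ∈ joinC T₁ T₂ := by
  obtain ⟨Y, ⟨v, hv, -⟩ | ⟨v, hv, -⟩⟩ := hne
  · exact Or.inl (h₁.labelSet_mem_clusterRep ⟨v, hv⟩)
  · exact Or.inr (hl ▸ h₂.labelSet_mem_clusterRep ⟨v, hv⟩)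

lemma IsATree.one_le_mcount {T : PreTree α V} (hT : T.IsATree) (hY : Y ∈ T.clusterRep) :
    1 ≤ mcount T Y := by
  obtain ⟨v, hv, rfl⟩ := hY
  exact (Set.ncard_pos (hT.finite_nodes.subset fun _ hu => hu.1)).mpr ⟨v, hv, rfl⟩

lemma one_le_joinN (h₁ : T₁.IsATree) (h₂ : T₂.IsATree) (hY : Y ∈ joinC T₁ T₂) :
    1 ≤ joinN T₁ T₂ Y := by
  rcases hY with hY | hY
  · exact le_max_of_le_left (h₁.one_le_mcount hY)
  · exact le_max_of_le_right (h₂.one_le_mcount hY)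

lemma join_arc_lt {p q : Set α × ℕ} (h : (join T₁ T₂).arc p q) :
    q.1 ⊆ p.1 ∧ (q.1 = p.1 → q.2 < p.2) := by
  obtain ⟨-, -, h | h⟩ := h
  · exact ⟨h.1.le, fun _ => by omega⟩
  · exact ⟨h.2.1.le, fun he => absurd he h.2.1.ne⟩

lemma join_path_le {p q : Set α × ℕ} (h : (join T₁ T₂).path p q) :
    q.1 ⊆ p.1 ∧ (q.1 = p.1 → q.2 ≤ p.2) := by
  induction h with
  | refl => exact ⟨subset_rfl, fun _ => le_rfl⟩
  | @tail r q _ harc ih =>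
    obtain ⟨hqr, hlt⟩ := join_arc_lt harc
    refine ⟨hqr.trans ih.1, fun he => ?_⟩
    have hrp : r.1 = p.1 := ih.1.antisymm (he ▸ hqr)
    have := hlt (he.trans hrp.symm)
    have := ih.2 hrp
    omega

lemma join_path_chain (hY : Y ∈ joinC T₁ T₂) {i j : ℕ} (hj : 1 ≤ j) (hji : j ≤ i)
    (hi : i ≤ joinN T₁ T₂ Y) : (join T₁ T₂).path (Y, i) (Y, j) := by
  induction i, hji using Nat.le_induction with
  | base => exact .refl
  | succ i hji ih =>
    have harc : (join T₁ T₂).arc (Y, i + 1) (Y, i) := ⟨hY, hY, Or.inl ⟨rfl, rfl, by omega, hi⟩⟩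
    exact .head harc (ih (by omega))

lemma exists_join_arc_of_ssubset (h₁ : T₁.IsATree) (h₂ : T₂.IsATree) (hY : Y ∈ joinC T₁ T₂)
    (hZ : Z ∈ joinC T₁ T₂) (hZY : Z ⊂ Y) :
    ∃ M ∈ joinC T₁ T₂, Z ⊆ M ∧ M ⊂ Y ∧ (join T₁ T₂).arc (Y, 1) (M, joinN T₁ T₂ M) := by
  obtain ⟨M, ⟨hM, hZM, hMY⟩, hmax⟩ := Set.Finite.exists_maximalFor Set.ncard
    {M ∈ joinC T₁ T₂ | Z ⊆ M ∧ M ⊂ Y} ((joinC_finite h₁ h₂).subset fun _ hM => hM.1)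
    ⟨Z, hZ, subset_rfl, hZY⟩
  refine ⟨M, hM, hZM, hMY, hY, hM, Or.inr ⟨rfl, hMY, rfl, one_le_joinN h₁ h₂ hM, ?_⟩⟩
  rintro ⟨M', hM', hMM', hM'Y⟩
  have hlt := Set.ncard_lt_ncard hMM' (finite_of_mem_joinC h₁ h₂ hM')
  exact (hmax ⟨hM', hZM.trans hMM'.subset, hM'Y⟩ hlt.le).not_gt hlt

lemma join_path_of_subset (h₁ : T₁.IsATree) (h₂ : T₂.IsATree) {i j : ℕ}
    (hY : Y ∈ joinC T₁ T₂) (hi : 1 ≤ i) (hiY : i ≤ joinN T₁ T₂ Y) (hZ : Z ∈ joinC T₁ T₂)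
    (hj : 1 ≤ j) (hjZ : j ≤ joinN T₁ T₂ Z) (hZY : Z ⊆ Y) (hji : Z = Y → j ≤ i) :
    (join T₁ T₂).path (Y, i) (Z, j) := by
  induction hk : Y.ncard using Nat.strong_induction_on generalizing Y i with
  | _ k ih =>
    by_cases he : Z = Y
    · subst he
      exact join_path_chain hY hj (hji rfl) hiY
    · obtain ⟨M, hM, hZM, hMY, harc⟩ :=
        exists_join_arc_of_ssubset h₁ h₂ hY hZ (hZY.ssubset_of_ne he)
      have hlt : M.ncard < k := hk ▸ Set.ncard_lt_ncard hMY (finite_of_mem_joinC h₁ h₂ hY)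
      exact ((join_path_chain hY le_rfl hi hiY).tail harc).trans
        (ih _ hlt hM (one_le_joinN h₁ h₂ hM) le_rfl hZM (fun h => h ▸ hjZ) rfl)

lemma join_path_iff (h₁ : T₁.IsATree) (h₂ : T₂.IsATree) {p q : Set α × ℕ}
    (hp : p ∈ (join T₁ T₂).nodes) (hq : q ∈ (join T₁ T₂).nodes) :
    (join T₁ T₂).path p q ↔ q.1 ⊆ p.1 ∧ (q.1 = p.1 → q.2 ≤ p.2) :=
  ⟨join_path_le, fun ⟨hs, hi⟩ =>
    join_path_of_subset h₁ h₂ hp.1 hp.2.1 hp.2.2 hq.1 hq.2.1 hq.2.2 hs hi⟩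

lemma join_label_eq_some_iff {p : Set α × ℕ} {a : α} :
    (join T₁ T₂).label p = some a ↔ p.2 = 1 ∧ p.1 ∈ joinC T₁ T₂ ∧
      a ∉ ⋃₀ {Z ∈ joinC T₁ T₂ | Z ⊂ p.1} ∧ p.1 = ⋃₀ {Z ∈ joinC T₁ T₂ | Z ⊂ p.1} ∪ {a} := by
  simp only [join]
  split_ifs with hcond
  · obtain ⟨hb, hpb⟩ := hcond.2.2.choose_spec
    refine ⟨fun h => Option.some_inj.mp h ▸ ⟨hcond.1, hcond.2.1, hb, hpb⟩,
      fun ⟨_, _, ha, hpa⟩ => congrArg some ?_⟩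
    have hap : a ∈ p.1 := hpa ▸ Or.inr rfl
    rw [hpb] at hap
    exact (hap.resolve_left ha).symm
  · exact ⟨fun h => (nomatch h), fun ⟨h1, h2, ha, hpa⟩ => absurd ⟨h1, h2, a, ha, hpa⟩ hcond⟩

lemma join_nodes_finite (h₁ : T₁.IsATree) (h₂ : T₂.IsATree) : (join T₁ T₂).nodes.Finite :=
  ((joinC_finite h₁ h₂).biUnion fun Y _ => (Set.finite_Icc 1 (joinN T₁ T₂ Y)).image (Y, ·)).subset
    fun p ⟨hp, hp1, hpn⟩ => Set.mem_biUnion hp ⟨p.2, ⟨hp1, hpn⟩, rfl⟩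

lemma join_parent_unique (h₁ : T₁.IsATree) (h₂ : T₂.IsATree) (hlam : IsLaminar (joinC T₁ T₂))
    {p p' q : Set α × ℕ} (hp : (join T₁ T₂).arc p q) (hp' : (join T₁ T₂).arc p' q) : p = p' := by
  obtain ⟨hpC, hqC, ⟨hqp, hpq, -, hpn⟩ | ⟨hp1, hqp, hqn, -, hmax⟩⟩ := hp <;>
  obtain ⟨hp'C, -, ⟨hqp', hpq', -, hpn'⟩ | ⟨hp'1, hqp', hqn', -, hmax'⟩⟩ := hp'
  · exact Prod.ext (hqp.symm.trans hqp') (by omega)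
  · rw [← hqp] at hpn
    omega
  · rw [← hqp'] at hpn'
    omega
  · obtain ⟨a, haq, -⟩ := exists_singleton_mem_joinC h₁ h₂ hqC
    refine Prod.ext (by_contra fun hne => ?_) (hp1.trans hp'1.symm)
    rcases hlam _ hpC _ hp'C ⟨a, hqp.subset haq, hqp'.subset haq⟩ with h | h
    · exact hmax' ⟨p.1, hpC, hqp, h.ssubset_of_ne hne⟩
    · exact hmax ⟨p'.1, hp'C, hqp', h.ssubset_of_ne (Ne.symm hne)⟩

lemma join_label_inj (hlam : IsLaminar (joinC T₁ T₂)) {p p' : Set α × ℕ} {a : α}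
    (hp : (join T₁ T₂).label p = some a) (hp' : (join T₁ T₂).label p' = some a) : p = p' := by
  obtain ⟨hp1, hpC, hap, hpa⟩ := join_label_eq_some_iff.mp hp
  obtain ⟨hp'1, hp'C, hap', hp'a⟩ := join_label_eq_some_iff.mp hp'
  have ha : a ∈ p.1 := hpa ▸ Or.inr rfl
  have ha' : a ∈ p'.1 := hp'a ▸ Or.inr rfl
  refine Prod.ext (by_contra fun hne => ?_) (hp1.trans hp'1.symm)
  rcases hlam _ hpC _ hp'C ⟨a, ha, ha'⟩ with h | h
  · exact hap' ⟨p.1, ⟨hpC, h.ssubset_of_ne hne⟩, ha⟩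
  · exact hap ⟨p'.1, ⟨hp'C, h.ssubset_of_ne (Ne.symm hne)⟩, ha'⟩

lemma join_leaf_labeled (h₁ : T₁.IsATree) (h₂ : T₂.IsATree) {p : Set α × ℕ}
    (hp : p ∈ (join T₁ T₂).nodes) (hleaf : ∀ q, ¬ (join T₁ T₂).arc p q) :
    ∃ a, (join T₁ T₂).label p = some a := by
  obtain ⟨hpC, hp1, hpn⟩ := hp
  have hp2 : p.2 = 1 := by
    by_contra hne
    exact hleaf (p.1, p.2 - 1) ⟨hpC, hpC, Or.inl ⟨rfl, by omega, by omega, hpn⟩⟩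
  have hmin : ∀ Z ∈ joinC T₁ T₂, ¬ Z ⊂ p.1 := fun Z hZ hZp =>
    let ⟨M, _, _, _, harc⟩ := exists_join_arc_of_ssubset h₁ h₂ hpC hZ hZp
    hleaf _ (hp2 ▸ harc)
  obtain ⟨a, hap, ha⟩ := exists_singleton_mem_joinC h₁ h₂ hpC
  have hpa : p.1 = {a} := by
    by_contra hne
    exact hmin _ ha ((Set.singleton_subset_iff.mpr hap).ssubset_of_ne (Ne.symm hne))
  have hempty : ⋃₀ {Z ∈ joinC T₁ T₂ | Z ⊂ p.1} = ∅ :=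
    Set.sUnion_eq_empty.mpr fun Z hZ => absurd hZ.2 (hmin Z hZ.1)
  exact ⟨a, join_label_eq_some_iff.mpr ⟨hp2, hpC, by simp [hempty], by rw [hempty, Set.empty_union, hpa]⟩⟩

lemma join_isATree (h₁ : T₁.IsATree) (h₂ : T₂.IsATree) (hl : T₁.labelSet = T₂.labelSet)
    (hlam : IsLaminar (joinC T₁ T₂)) : (join T₁ T₂).IsATree where
  finite_nodes := join_nodes_finite h₁ h₂
  arc_mem_left := by
    rintro p q ⟨hpC, -, h | h⟩
    · exact ⟨hpC, by omega, h.2.2.2⟩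
    · exact ⟨hpC, h.1.ge, h.1 ▸ one_le_joinN h₁ h₂ hpC⟩
  arc_mem_right := by
    rintro p q ⟨-, hqC, h | h⟩
    · exact ⟨hqC, h.2.2.1, by rw [h.1]; omega⟩
    · exact ⟨hqC, h.2.2.2.1, h.2.2.1.le⟩
  parent_unique := join_parent_unique h₁ h₂ hlam
  acyclic := fun harc hpath => by
    obtain ⟨hqp, hlt⟩ := join_arc_lt harc
    obtain ⟨hpq, hle⟩ := join_path_le hpath
    have := hlt (hqp.antisymm hpq)
    have := hle (hpq.antisymm hqp)
    omega
  rooted := by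
    rintro ⟨p, hp, -⟩
    have hA := labelSet_mem_joinC h₁ h₂ hl ⟨p.1, hp⟩
    have hr : (T₁.labelSet, joinN T₁ T₂ T₁.labelSet) ∈ (join T₁ T₂).nodes :=
      ⟨hA, one_le_joinN h₁ h₂ hA, le_rfl⟩
    refine ⟨_, hr, fun q hq => (join_path_iff h₁ h₂ hr hq).mpr
      ⟨subset_labelSet_of_mem_joinC hl hq.1, fun he => hq.2.2.trans (congrArg (joinN T₁ T₂) he).le⟩⟩
  label_mem := fun h => by
    obtain ⟨hp1, hpC, -⟩ := join_label_eq_some_iff.mp h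
    exact ⟨hpC, hp1.ge, hp1 ▸ one_le_joinN h₁ h₂ hpC⟩
  label_inj := join_label_inj hlam
  leaf_labeled := fun _ hp hleaf => join_leaf_labeled h₁ h₂ hp hleaf

end Join

section JoinMap

variable {U : Type} {T : PreTree α U} {T₁ : PreTree α V} {T₂ : PreTree α W} {u v : U}

def sameClusterBelow (T : PreTree α U) (v : U) : Set U :=
  {u | u ∈ T.nodes ∧ T.cluster u = T.cluster v ∧ T.pathNT v u}

lemma joinMap_eq (T : PreTree α U) (v : U) :
    joinMap T v = (T.cluster v, (sameClusterBelow T v).ncard + 1) :=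
  rfl

lemma IsATree.sameClusterBelow_finite (hT : T.IsATree) (v : U) :
    (sameClusterBelow T v).Finite :=
  hT.finite_nodes.subset fun _ hu => hu.1

lemma sameClusterBelow_subset (h : T.path u v) (he : T.cluster u = T.cluster v) :
    sameClusterBelow T v ⊆ sameClusterBelow T u :=
  fun _ ⟨hx, hxv, hvx⟩ => ⟨hx, hxv.trans he.symm, hvx.trans_right h⟩

lemma IsATree.ncard_sameClusterBelow_lt_mcount (hT : T.IsATree) (hv : v ∈ T.nodes) :
    (sameClusterBelow T v).ncard < mcount T (T.cluster v) :=
  Set.ncard_lt_ncard ⟨fun _ hu => ⟨hu.1, hu.2.1⟩,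
    fun hsub => hT.pathNT_irrefl v (hsub ⟨hv, rfl⟩).2.2⟩ (hT.finite_nodes.subset fun _ hu => hu.1)

lemma IsATree.ncard_sameClusterBelow_lt (hT : T.IsATree) (hv : v ∈ T.nodes) (h : T.pathNT u v)
    (he : T.cluster u = T.cluster v) :
    (sameClusterBelow T v).ncard < (sameClusterBelow T u).ncard :=
  Set.ncard_lt_ncard ⟨sameClusterBelow_subset h.to_reflTransGen he,
    fun hsub => hT.pathNT_irrefl v (hsub ⟨hv, he.symm, h⟩).2.2⟩ (hT.sameClusterBelow_finite u)

lemma IsATree.path_iff_joinMap (hT : T.IsATree) (hu : u ∈ T.nodes) (hv : v ∈ T.nodes) :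
    T.path u v ↔ (joinMap T v).1 ⊆ (joinMap T u).1 ∧
      ((joinMap T v).1 = (joinMap T u).1 → (joinMap T v).2 ≤ (joinMap T u).2) := by
  simp only [joinMap_eq]
  refine ⟨fun h => ⟨cluster_subset_of_path h, fun he => Nat.succ_le_succ <|
    Set.ncard_le_ncard (sameClusterBelow_subset h he.symm) (hT.sameClusterBelow_finite u)⟩,
    fun ⟨hs, hi⟩ => ?_⟩
  obtain ⟨a, ha⟩ := hT.cluster_nonempty hv
  rcases hT.path_or_path_of_cluster_inter ⟨a, hs ha, ha⟩ with h | h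
  · exact h
  · by_cases huv : u = v
    · exact huv ▸ .refl
    · have he : T.cluster v = T.cluster u := hs.antisymm (cluster_subset_of_path h)
      have := hT.ncard_sameClusterBelow_lt hu (pathNT_of_path_of_ne h (Ne.symm huv)) he
      have := hi he
      omega

lemma IsATree.joinMap_injOn (hT : T.IsATree) : Set.InjOn (joinMap T) T.nodes := by
  intro u hu v hv he
  have hle : ∀ p : Set α × ℕ, p.1 ⊆ p.1 ∧ (p.1 = p.1 → p.2 ≤ p.2) :=
    fun _ => ⟨subset_rfl, fun _ => le_rfl⟩
  refine hT.path_antisymm ((hT.path_iff_joinMap hu hv).mpr ?_) ((hT.path_iff_joinMap hv hu).mpr ?_)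
  · rw [he]; exact hle _
  · rw [he]; exact hle _

lemma IsATree.joinMap_mem_nodes (hT : T.IsATree) (hC : T.clusterRep ⊆ joinC T₁ T₂)
    (hn : ∀ Y, mcount T Y ≤ joinN T₁ T₂ Y) (hv : v ∈ T.nodes) :
    joinMap T v ∈ (join T₁ T₂).nodes :=
  ⟨hC ⟨v, hv, rfl⟩, Nat.le_add_left 1 _, (hT.ncard_sameClusterBelow_lt_mcount hv).trans_le (hn _)⟩

lemma IsATree.join_label_joinMap (hT : T.IsATree) (hC : T.clusterRep ⊆ joinC T₁ T₂) {a : α}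
    (hv : T.label v = some a) (hmin : SmallestContaining (joinC T₁ T₂) a (T.cluster v)) :
    (join T₁ T₂).label (joinMap T v) = some a := by
  have hbelow : sameClusterBelow T v = ∅ := Set.eq_empty_of_forall_notMem
    fun u ⟨_, he, hvu⟩ => hT.pathNT_irrefl v
      (hvu.trans_left ((hT.mem_cluster_iff hv).mp (he ▸ mem_cluster_self hv)))
  refine join_label_eq_some_iff.mpr ⟨by simp [joinMap_eq, hbelow], hmin.1,
    fun ⟨Z, ⟨hZ, hZv⟩, haZ⟩ => hZv.2 (hmin.2.2 Z hZ haZ), ?_⟩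
  refine (Set.union_subset (Set.sUnion_subset fun Z hZ => hZ.2.subset)
    (Set.singleton_subset_iff.mpr (mem_cluster_self hv))).antisymm' fun b ⟨w, hvw, hw⟩ => ?_
  by_cases hwv : w = v
  · subst hwv
    exact Or.inr (Option.some_inj.mp (hw.symm.trans hv))
  · have hwvc : T.cluster w ⊂ T.cluster v := (cluster_subset_of_path hvw).ssubset_of_ne
      fun he => hwv (hT.path_antisymm ((hT.mem_cluster_iff hv).mp (he ▸ mem_cluster_self hv)) hvw)
    exact Or.inl ⟨T.cluster w, ⟨hC ⟨w, hT.mem_nodes_of_path (hT.label_mem hv) hvw, rfl⟩, hwvc⟩,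
      mem_cluster_self hw⟩

lemma IsATree.isWTE_joinMap (hT : T.IsATree) (h₁ : T₁.IsATree) (h₂ : T₂.IsATree)
    (hC : T.clusterRep ⊆ joinC T₁ T₂) (hn : ∀ Y, mcount T Y ≤ joinN T₁ T₂ Y)
    (hmin : ∀ v a, T.label v = some a → SmallestContaining (joinC T₁ T₂) a (T.cluster v)) :
    IsWTE T (join T₁ T₂) (joinMap T) :=
  ⟨fun _ hv => hT.joinMap_mem_nodes hC hn hv, fun _ hu _ hv => hT.joinMap_injOn hu hv,
    fun v a hv => hT.join_label_joinMap hC hv (hmin v a hv),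
    fun _ hu _ hv => (hT.path_iff_joinMap hu hv).trans
      (join_path_iff h₁ h₂ (hT.joinMap_mem_nodes hC hn hu) (hT.joinMap_mem_nodes hC hn hv)).symm⟩

lemma SmallestContaining.eq {R : Set (Set α)} {a : α} {X Y : Set α}
    (hX : SmallestContaining R a X) (hY : SmallestContaining R a Y) : X = Y :=
  (hX.2.2 Y hY.1 hY.2.1).antisymm (hY.2.2 X hX.1 hX.2.1)

lemma SmallestContaining.union {R R' : Set (Set α)} {a : α} {X : Set α}
    (h : SmallestContaining R a X) (h' : SmallestContaining R' a X) :
    SmallestContaining (R ∪ R') a X :=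
  ⟨Or.inl h.1, h.2.1, fun Y hY haY => hY.elim (h.2.2 Y · haY) (h'.2.2 Y · haY)⟩

lemma ancCompat_of_smallestContaining_of_nested (h₁ : T₁.IsATree) (h₂ : T₂.IsATree)
    (hl : T₁.labelSet = T₂.labelSet)
    (hsm : ∀ a ∈ T₁.labelSet, ∃ X : Set α,
      SmallestContaining T₁.clusterRep a X ∧ SmallestContaining T₂.clusterRep a X)
    (hnest : ∀ X ∈ T₁.clusterRep, ∀ Y ∈ T₂.clusterRep, (X ∩ Y).Nonempty → X ⊆ Y ∨ Y ⊆ X) :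
    AncCompat T₁ T₂ := by
  refine ⟨_, join T₁ T₂, join_isATree h₁ h₂ hl (isLaminar_joinC h₁ h₂ hnest),
    ⟨joinMap T₁, h₁.isWTE_joinMap h₁ h₂ (fun _ hX => Or.inl hX) (fun _ => le_max_left _ _)
      fun v a hv => ?_⟩,
    ⟨joinMap T₂, h₂.isWTE_joinMap h₁ h₂ (fun _ hX => Or.inr hX) (fun _ => le_max_right _ _)
      fun v a hv => ?_⟩⟩
  · obtain ⟨X, hX₁, hX₂⟩ := hsm a ⟨v, hv⟩
    exact (h₁.smallestContaining_cluster hv).eq hX₁ ▸ hX₁.union hX₂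
  · obtain ⟨X, hX₁, hX₂⟩ := hsm a (hl ▸ ⟨v, hv⟩)
    exact (h₂.smallestContaining_cluster hv).eq hX₂ ▸ hX₁.union hX₂

end JoinMap

end PreTree

/-- For 𝒜-trees with the same label set, ancestral compatibility, local
compatibility, and the joint condition on cluster representations are all equivalent. -/
theorem stmt14 {α V W : Type} (T₁ : PreTree α V) (T₂ : PreTree α W)
    (h₁ : T₁.IsATree) (h₂ : T₂.IsATree) (hl : T₁.labelSet = T₂.labelSet) :
    (PreTree.AncCompat T₁ T₂ ↔ PreTree.LocallyCompatible T₁ T₂) ∧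
    (PreTree.LocallyCompatible T₁ T₂ ↔
      ((∀ a ∈ T₁.labelSet, ∃ X : Set α,
          PreTree.SmallestContaining T₁.clusterRep a X ∧
          PreTree.SmallestContaining T₂.clusterRep a X) ∧
       (∀ X ∈ T₁.clusterRep, ∀ Y ∈ T₂.clusterRep,
          (X ∩ Y).Nonempty → X ⊆ Y ∨ Y ⊆ X))) := by
  have iii_i := PreTree.ancCompat_of_smallestContaining_of_nested h₁ h₂ hl
  have ii_iii (h : PreTree.LocallyCompatible T₁ T₂) :=
    And.intro (fun a (ha : a ∈ T₁.labelSet) =>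
      PreTree.PathCompatible.exists_smallestContaining h.1 h₁ h₂ hl ha)
      fun X (hX : X ∈ T₁.clusterRep) Y (hY : Y ∈ T₂.clusterRep) =>
        h.subset_or_subset h₁ h₂ hl hX hY
  exact ⟨⟨fun h => h.locallyCompatible h₁ h₂, fun h => iii_i (ii_iii h).1 (ii_iii h).2⟩,
    ii_iii, fun h => (iii_i h.1 h.2).locallyCompatible h₁ h₂⟩
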